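/- For every odd integer n ≥ 11, the polynomial g(z) = 1 + z³ + z⁷ + z⁸ + z⁹ + z^n is a Newman polynomial of degree n with exactly 5 zeros in the open unit disk and no zeros on the unit circle. -/

import Mathlib

/-
On the unit circle `conj z = z⁻¹`, and multiplying out `f z * f z⁻¹` for
`f = 1 + X^3 + X^7 + X^8 + X^9` gives `|f z|^2 = 1 + |1 + z|^2 W(2 Re z)` with a degree-8 polynomial
`W` that is positive on `[-2, 2]`. Hence `|f| > 1` on the circle except at `z = -1`, where
`g = f + X^n` takes the value `-2` for odd `n`. So `|g - f| = 1 < |g| + |f|` on the circle, and the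
symmetric form of Rouché's theorem gives `N(g) = N(f)` and no zeros of `g` on the circle.
Finally `N(f) = 5` by a second application of Rouché, comparing `f` with the polynomial whose roots
are the roots of `f` rounded to the grid `(1/16) ℤ[i]`.
-/

open Polynomial

/-- Number of zeros of a polynomial in the open unit disk, counted with multiplicity. -/
noncomputable def diskZeros (h : Polynomial ℂ) : ℕ :=
  (h.roots.filter (fun z => ‖z‖ < 1)).card

open Complex Metric ComplexConjugate
open scoped Real

section ArgumentPrinciple

variable {c : ℂ} {R : ℝ}

theorem circleIntegral_inv_sub_of_notMem_closedBall (hR : 0 ≤ R) {a : ℂ}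
    (ha : a ∉ closedBall c R) :
    (∮ z in C(c, R), (z - a)⁻¹) = 0 := by
  have hne : ∀ z ∈ closedBall c R, z - a ≠ 0 := fun z hz h => ha (sub_eq_zero.1 h ▸ hz)
  refine circleIntegral_eq_zero_of_differentiable_on_off_countable hR Set.countable_empty
    ((continuousOn_id.sub continuousOn_const).inv₀ hne) fun z hz => ?_
  exact (differentiableAt_id.sub_const a).inv (hne z (ball_subset_closedBall hz.1))

theorem circleIntegral_inv_sub (hR : 0 ≤ R) {a : ℂ} (ha : a ∉ sphere c R) :
    (∮ z in C(c, R), (z - a)⁻¹) = if dist a c < R then 2 * π * I else 0 := by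
  split_ifs with hball
  · exact circleIntegral.integral_sub_inv_of_mem_ball hball
  · refine circleIntegral_inv_sub_of_notMem_closedBall hR fun hcl => ?_
    rw [← ball_union_sphere] at hcl
    exact hcl.elim hball ha

theorem circleIntegral_multisetSum_inv_sub (hR : 0 ≤ R) (s : Multiset ℂ)
    (hs : ∀ a ∈ s, a ∉ sphere c R) :
    (∮ z in C(c, R), (s.map fun a => (z - a)⁻¹).sum) =
      2 * π * I * (s.filter (dist · c < R)).card := by
  induction s using Multiset.induction with
  | empty => simp [circleIntegral]
  | cons a s ih =>
    rw [Multiset.forall_mem_cons] at hs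
    have hcont : ∀ b ∉ sphere c R, ContinuousOn (fun z => (z - b)⁻¹) (sphere c R) :=
      fun b hb => ContinuousOn.inv₀ (by fun_prop) fun z hz h =>
        hb (by rwa [sub_eq_zero.1 h] at hz)
    have htail : CircleIntegrable (fun z => (s.map fun b => (z - b)⁻¹).sum) c R :=
      (continuousOn_multiset_sum s fun b hb => hcont b (hs.2 b hb)).circleIntegrable hR
    simp only [Multiset.map_cons, Multiset.sum_cons]
    rw [circleIntegral.integral_add ((hcont a hs.1).circleIntegrable hR) htail, ih hs.2,
      circleIntegral_inv_sub hR hs.1, Multiset.filter_cons]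
    split_ifs
    · simp only [Multiset.singleton_add, Multiset.card_cons, Nat.cast_succ]
      ring
    · simp only [zero_add]

theorem circleIntegral_derivative_div_eval (hR : 0 ≤ R) {p : ℂ[X]}
    (hp : ∀ z ∈ sphere c R, p.eval z ≠ 0) :
    (∮ z in C(c, R), p.derivative.eval z / p.eval z) =
      2 * π * I * (p.roots.filter (dist · c < R)).card := by
  have hroots : ∀ a ∈ p.roots, a ∉ sphere c R := fun a ha hsph =>
    hp a hsph (isRoot_of_mem_roots ha)
  rw [← circleIntegral_multisetSum_inv_sub hR _ hroots]
  refine circleIntegral.integral_congr hR fun z hz => ?_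
  simp only [(IsAlgClosed.splits p).eval_derivative_div_eval_of_ne_zero (hp z hz), one_div]

theorem circleIntegrable_derivative_div_eval (hR : 0 ≤ R) {p : ℂ[X]}
    (hp : ∀ z ∈ sphere c R, p.eval z ≠ 0) :
    CircleIntegrable (fun z => p.derivative.eval z / p.eval z) c R :=
  (ContinuousOn.div (by fun_prop) (by fun_prop) hp).circleIntegrable hR

theorem div_mem_slitPlane_of_norm_sub_lt {u v : ℂ} (h : ‖u - v‖ < ‖u‖ + ‖v‖) :
    u / v ∈ slitPlane := by
  have hv : v ≠ 0 := by rintro rfl; simp at h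
  by_contra hslit
  obtain ⟨hre, him⟩ : (u / v).re ≤ 0 ∧ (u / v).im = 0 := by
    simpa [mem_slitPlane_iff, not_or] using hslit
  have hofReal : ((u / v).re : ℂ) = u / v := ext (by simp) (by simp [him])
  have hu : u = (-(u / v).re) • -v := by
    rw [neg_smul_neg, Complex.real_smul, hofReal, div_mul_cancel₀ u hv]
  have hray : SameRay ℝ ((-(u / v).re) • -v) (-v) :=
    SameRay.sameRay_nonneg_smul_left _ (neg_nonneg.2 hre)
  rw [← hu, sameRay_iff_norm_add, ← sub_eq_add_neg, norm_neg] at hray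
  exact h.ne hray

theorem hasDerivAt_log_eval_div_eval {p q : ℂ[X]} {z : ℂ} (hp : p.eval z ≠ 0)
    (hq : q.eval z ≠ 0) (hslit : p.eval z / q.eval z ∈ slitPlane) :
    HasDerivAt (fun w => log (p.eval w / q.eval w))
      (p.derivative.eval z / p.eval z - q.derivative.eval z / q.eval z) z := by
  convert ((p.hasDerivAt z).fun_div (q.hasDerivAt z) hq).clog hslit using 1
  field_simp

/-- Rouché's theorem, symmetric form: on the circle `p / q` avoids `(-∞, 0]`, so `log (p / q)` is
a primitive of `p' / p - q' / q` there. -/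
theorem card_roots_filter_eq_of_norm_sub_lt (hR : 0 ≤ R) {p q : ℂ[X]}
    (h : ∀ z ∈ sphere c R, ‖p.eval z - q.eval z‖ < ‖p.eval z‖ + ‖q.eval z‖) :
    (p.roots.filter (dist · c < R)).card = (q.roots.filter (dist · c < R)).card := by
  have hp : ∀ z ∈ sphere c R, p.eval z ≠ 0 := fun z hz h0 => by simpa [h0] using h z hz
  have hq : ∀ z ∈ sphere c R, q.eval z ≠ 0 := fun z hz h0 => by simpa [h0] using h z hz
  have hzero :
      (∮ z in C(c, R), (p.derivative.eval z / p.eval z - q.derivative.eval z / q.eval z)) = 0 :=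
    circleIntegral.integral_eq_zero_of_hasDerivWithinAt hR fun z hz =>
      (hasDerivAt_log_eval_div_eval (hp z hz) (hq z hz)
        (div_mem_slitPlane_of_norm_sub_lt (h z hz))).hasDerivWithinAt
  rw [circleIntegral.integral_sub (circleIntegrable_derivative_div_eval hR hp)
    (circleIntegrable_derivative_div_eval hR hq), sub_eq_zero,
    circleIntegral_derivative_div_eval hR hp, circleIntegral_derivative_div_eval hR hq] at hzero
  exact_mod_cast mul_left_cancel₀ (by simp [Real.pi_ne_zero]) hzero

end ArgumentPrinciple

theorem diskZeros_eq_of_norm_sub_lt {p q : ℂ[X]}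
    (h : ∀ z : ℂ, ‖z‖ = 1 → ‖p.eval z - q.eval z‖ < ‖p.eval z‖ + ‖q.eval z‖) :
    diskZeros p = diskZeros q := by
  simpa [diskZeros] using
    card_roots_filter_eq_of_norm_sub_lt (c := 0) zero_le_one fun z hz => h z (by simpa using hz)

noncomputable def newmanBase : ℂ[X] := 1 + X ^ 3 + X ^ 7 + X ^ 8 + X ^ 9

theorem eval_newmanBase (z : ℂ) : newmanBase.eval z = 1 + z ^ 3 + z ^ 7 + z ^ 8 + z ^ 9 := by
  simp [newmanBase]

def newmanWeight (x : ℝ) : ℝ :=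
  2 + 2 * x - 6 * x ^ 2 - 7 * x ^ 3 + 11 * x ^ 4 + 5 * x ^ 5 - 6 * x ^ 6 - x ^ 7 + x ^ 8

theorem newmanWeight_pos {x : ℝ} (h₁ : -2 ≤ x) (h₂ : x ≤ 2) : 0 < newmanWeight x := by
  have hx : x ∈ Set.Icc (-2 : ℝ) 2 := ⟨h₁, h₂⟩
  rw [← Set.Icc_union_Icc_eq_Icc (b := -3/2) (by norm_num) (by norm_num),
    ← Set.Icc_union_Icc_eq_Icc (a := -3/2) (b := -1) (by norm_num) (by norm_num),
    ← Set.Icc_union_Icc_eq_Icc (a := -1) (b := 0) (by norm_num) (by norm_num),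
    ← Set.Icc_union_Icc_eq_Icc (a := 0) (b := 1) (by norm_num) (by norm_num),
    ← Set.Icc_union_Icc_eq_Icc (a := 1) (b := 3/2) (by norm_num) (by norm_num),
    ← Set.Icc_union_Icc_eq_Icc (a := 3/2) (b := 7/4) (by norm_num) (by norm_num)] at hx
  simp only [Set.mem_union, Set.mem_Icc] at hx
  -- On each piece `[a, b]` the Bernstein coefficients of `newmanWeight` are positive, so it is a
  -- positive combination of the products `(x - a)^i (b - x)^(8 - i)`.
  rcases hx with
    ⟨ha, hb⟩ | ⟨ha, hb⟩ | ⟨ha, hb⟩ | ⟨ha, hb⟩ | ⟨ha, hb⟩ | ⟨ha, hb⟩ | ⟨ha, hb⟩ <;>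
  · have h i j := mul_nonneg (pow_nonneg (sub_nonneg.2 ha) i) (pow_nonneg (sub_nonneg.2 hb) j)
    rw [newmanWeight]
    linarith [h 0 8, h 1 7, h 2 6, h 3 5, h 4 4, h 5 3, h 6 2, h 7 1, h 8 0]

theorem sq_norm_eval_newmanBase {z : ℂ} (hz : ‖z‖ = 1) :
    ‖newmanBase.eval z‖ ^ 2 = 1 + ‖1 + z‖ ^ 2 * newmanWeight (2 * z.re) := by
  have hz0 : z ≠ 0 := norm_ne_zero_iff.1 (by simp [hz])
  have hconj : conj z = z⁻¹ := (inv_eq_conj hz).symm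
  have hre : 2 * (z.re : ℂ) = z + z⁻¹ := by rw [← hconj, add_conj]; push_cast; ring
  apply ofReal_injective
  push_cast
  rw [← mul_conj', ← mul_conj', newmanWeight, eval_newmanBase]
  push_cast
  rw [hre]
  simp only [map_add, map_pow, map_one, hconj]
  field_simp
  ring

theorem newmanWeight_pos_of_norm_eq_one {z : ℂ} (hz : ‖z‖ = 1) :
    0 < newmanWeight (2 * z.re) := by
  have := abs_le.1 (hz ▸ abs_re_le_norm z)
  exact newmanWeight_pos (by linarith) (by linarith)

theorem one_le_norm_eval_newmanBase {z : ℂ} (hz : ‖z‖ = 1) :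
    1 ≤ ‖newmanBase.eval z‖ := by
  have h := sq_norm_eval_newmanBase hz
  nlinarith [norm_nonneg (newmanBase.eval z), newmanWeight_pos_of_norm_eq_one hz,
    sq_nonneg ‖1 + z‖]

theorem one_lt_norm_eval_newmanBase {z : ℂ} (hz : ‖z‖ = 1) (hz₁ : z ≠ -1) :
    1 < ‖newmanBase.eval z‖ := by
  have h := sq_norm_eval_newmanBase hz
  have h₁ : 0 < ‖1 + z‖ := norm_pos_iff.2 fun h => hz₁ (by linear_combination h)
  nlinarith [norm_nonneg (newmanBase.eval z), newmanWeight_pos_of_norm_eq_one hz,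
    sq_pos_of_pos h₁]

theorem eval_newmanBase_add_X_pow_ne_zero {n : ℕ} (hn : Odd n) {z : ℂ} (hz : ‖z‖ = 1) :
    (newmanBase + X ^ n).eval z ≠ 0 := by
  rw [eval_add, eval_pow, eval_X]
  by_cases hz₁ : z = -1
  · subst hz₁
    norm_num [eval_newmanBase, hn.neg_one_pow]
  · intro h
    have := one_lt_norm_eval_newmanBase hz hz₁
    rw [eq_neg_of_add_eq_zero_left h, norm_neg, norm_pow, hz, one_pow] at this
    exact this.false

theorem diskZeros_newmanBase_add_X_pow {n : ℕ} (hn : Odd n) :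
    diskZeros (newmanBase + X ^ n) = diskZeros newmanBase := by
  refine diskZeros_eq_of_norm_sub_lt fun z hz => ?_
  rw [eval_add, add_sub_cancel_left, eval_pow, eval_X, norm_pow, hz, one_pow]
  by_cases hz₁ : z = -1
  · subst hz₁
    norm_num [eval_newmanBase, hn.neg_one_pow]
  · linarith [one_lt_norm_eval_newmanBase hz hz₁, norm_nonneg (newmanBase.eval z + z ^ n)]

theorem sub_mul_sub_conj (z w : ℂ) :
    (z - w) * (z - conj w) = z ^ 2 - 2 * w.re * z + normSq w := by
  have h := add_conj w
  push_cast at h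
  linear_combination (-z) * h + mul_conj w

-- The roots of `newmanBase`, rounded to `(1/16) ℤ[i]`.
noncomputable def approxRoots : Multiset ℂ :=
  -7/8 ::ₘ
    ({⟨3/8, 3/4⟩, ⟨13/16, 7/16⟩, ⟨-15/16, 11/16⟩, ⟨-5/16, 19/16⟩} : Multiset ℂ).bind
      fun w => {w, conj w}

noncomputable def approxPoly : ℂ[X] := (approxRoots.map fun a => X - C a).prod

theorem norm_lt_one_iff_normSq_lt_one (z : ℂ) : ‖z‖ < 1 ↔ normSq z < 1 := by
  rw [normSq_eq_norm_sq, sq_lt_one_iff₀ (norm_nonneg z)]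

theorem diskZeros_approxPoly : diskZeros approxPoly = 5 := by
  rw [diskZeros, approxPoly, roots_multiset_prod_X_sub_C]
  norm_num [approxRoots, Multiset.filter_cons, Multiset.filter_singleton,
    norm_lt_one_iff_normSq_lt_one, normSq_mk]

theorem eval_approxPoly (z : ℂ) :
    approxPoly.eval z = (z + 7/8) * (z ^ 2 - 3/4 * z + 45/64) * (z ^ 2 - 13/8 * z + 218/256) *
      (z ^ 2 + 15/8 * z + 346/256) * (z ^ 2 + 5/8 * z + 386/256) := by
  rw [approxPoly, eval_multiset_prod, Multiset.map_map, approxRoots, Multiset.map_cons,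
    Multiset.map_bind, Multiset.prod_cons, Multiset.prod_bind]
  simp only [Function.comp_apply, eval_sub, eval_X, eval_C, Multiset.insert_eq_cons,
    Multiset.map_cons, Multiset.map_singleton, Multiset.prod_cons, Multiset.prod_singleton,
    sub_mul_sub_conj, normSq_mk]
  push_cast
  ring

theorem sub_eval_approxPoly (z : ℂ) :
    newmanBase.eval z - approxPoly.eval z =
      ∑ i : Fin 8, ((![-72669491/1073741824, 4338507/134217728, 1625911/16777216, -477373/2097152,
        -14599/65536, 213/16384, -9/1024, 3/128] : Fin 8 → ℝ) i : ℂ) * z ^ (i : ℕ) := by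
  rw [eval_newmanBase, eval_approxPoly]
  simp only [Fin.sum_univ_eight, Fin.isValue, Matrix.cons_val_zero, Matrix.cons_val_one,
    Matrix.cons_val, Fin.coe_ofNat_eq_mod, Nat.reduceMod]
  push_cast
  ring

theorem norm_sum_mul_pow_le {n : ℕ} (c : Fin n → ℝ) {z : ℂ} (hz : ‖z‖ ≤ 1) :
    ‖∑ i, (c i : ℂ) * z ^ (i : ℕ)‖ ≤ ∑ i, |c i| := by
  refine (norm_sum_le _ _).trans (Finset.sum_le_sum fun i _ => ?_)
  rw [norm_mul, norm_real, Real.norm_eq_abs, norm_pow]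
  exact mul_le_of_le_one_right (abs_nonneg _) (pow_le_one₀ (norm_nonneg z) hz)

theorem norm_sub_eval_approxPoly_lt {z : ℂ} (hz : ‖z‖ = 1) :
    ‖newmanBase.eval z - approxPoly.eval z‖ < 1 := by
  rw [sub_eval_approxPoly]
  refine (norm_sum_mul_pow_le _ hz.le).trans_lt ?_
  simp only [Fin.sum_univ_eight, Fin.isValue, Matrix.cons_val_zero, Matrix.cons_val_one,
    Matrix.cons_val]
  norm_num [abs_div]

theorem diskZeros_newmanBase : diskZeros newmanBase = 5 := by
  rw [← diskZeros_approxPoly]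
  refine diskZeros_eq_of_norm_sub_lt fun z hz => ?_
  linarith [norm_sub_eval_approxPoly_lt hz, one_le_norm_eval_newmanBase hz,
    norm_nonneg (approxPoly.eval z)]

theorem stmt_13 (n : ℕ) (hodd : Odd n) (hn : 11 ≤ n) :
    (∀ j, (1 + X ^ 3 + X ^ 7 + X ^ 8 + X ^ 9 + X ^ n : Polynomial ℂ).coeff j = 0 ∨
        (1 + X ^ 3 + X ^ 7 + X ^ 8 + X ^ 9 + X ^ n : Polynomial ℂ).coeff j = 1) ∧
    (1 + X ^ 3 + X ^ 7 + X ^ 8 + X ^ 9 + X ^ n : Polynomial ℂ).natDegree = n ∧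
    diskZeros (1 + X ^ 3 + X ^ 7 + X ^ 8 + X ^ 9 + X ^ n) = 5 ∧
    ∀ z : ℂ, ‖z‖ = 1 →
      (1 + X ^ 3 + X ^ 7 + X ^ 8 + X ^ 9 + X ^ n : Polynomial ℂ).eval z ≠ 0 := by
  refine ⟨fun j => ?_, ?_, ?_, fun z hz => eval_newmanBase_add_X_pow_ne_zero hodd hz⟩
  · simp only [coeff_add, coeff_one, coeff_X_pow]
    split_ifs <;> first | omega | norm_num
  · have hdeg : newmanBase.natDegree = 9 := by rw [newmanBase]; compute_degree!
    change (newmanBase + X ^ n).natDegree = n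
    rw [natDegree_add_eq_right_of_natDegree_lt (by rw [hdeg, natDegree_X_pow]; omega),
      natDegree_X_pow]
  · exact (diskZeros_newmanBase_add_X_pow hodd).trans diskZeros_newmanBase
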